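/- Let R be a Noetherian local ring with maximal ideal m, and let M be a finitely generated R-module. If the length of M/m^{r+1}M equals r (a finite natural number), then m^r M = 0, and hence M = M/m^{r+1}M has length exactly r. -/

import Mathlib

/-!
Put `Q = M ⧸ m^(r+1) M`. The chain `Q ⊇ m Q ⊇ m² Q ⊇ ⋯` cannot drop `r + 1` times in a module of
length `r`, so `m^j Q = m^(j+1) Q` for some `j ≤ r`, and Nakayama gives `m^r Q = 0`, i.e.
`m^r M ⊆ m^(r+1) M`. A second application of Nakayama, now in `M`, gives `m^r M = 0`; in particular
`m^(r+1) M = 0`, so `M ≅ Q` has length `r`.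
-/

/-- `moduleLengthEq R M r` : the `R`-module `M` has finite length exactly `r`,
expressed by the existence of a composition series from `⊥` to `⊤` of length `r`. -/
def moduleLengthEq (R M : Type*) [Ring R] [AddCommGroup M] [Module R M] (r : ℕ) : Prop :=
  ∃ s : CompositionSeries (Submodule R M), s.head = ⊥ ∧ s.last = ⊤ ∧ s.length = r

lemma moduleLengthEq_iff_length_eq {R M : Type*} [Ring R] [AddCommGroup M] [Module R M]
    {r : ℕ} : moduleLengthEq R M r ↔ Module.length R M = r := by
  constructor
  · rintro ⟨s, hhead, hlast, rfl⟩
    exact (Module.length_compositionSeries s hhead hlast).symm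
  · intro h
    obtain ⟨s, hhead, hlast⟩ := isFiniteLength_iff_exists_compositionSeries.mp
      (Module.length_ne_top_iff.mp (h ▸ ENat.natCast_ne_top r))
    refine ⟨s, hhead, hlast, ?_⟩
    exact_mod_cast (Module.length_compositionSeries s hhead hlast).trans h

lemma Antitone.exists_le_eq_succ_of_krullDim_le {α : Type*} [PartialOrder α] {f : ℕ → α}
    (hf : Antitone f) {r : ℕ} (hα : Order.krullDim α ≤ r) : ∃ j ≤ r, f (j + 1) = f j := by
  by_contra! hne
  let s : LTSeries α :=
    { length := r + 1
      toFun := fun i ↦ f (r + 1 - i)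
      step := fun i ↦ by
        have hi : r + 1 - i.succ + 1 = r + 1 - i.castSucc := by simp; omega
        simp only [← hi]
        exact (hf (Nat.le_succ _)).lt_of_ne (hne _ (by simp)) }
  have := (Order.LTSeries.length_le_krullDim s).trans hα
  norm_cast at this
  simp [s] at this

lemma Submodule.pow_smul_top_eq_bot_of_pow_smul_top_le {R M : Type*} [CommRing R]
    [AddCommGroup M] [Module R M] [IsNoetherian R M] {I : Ideal R} (hI : I ≤ Ideal.jacobson ⊥)
    {j : ℕ} (h : I ^ j • (⊤ : Submodule R M) ≤ I ^ (j + 1) • ⊤) :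
    I ^ j • (⊤ : Submodule R M) = ⊥ :=
  eq_bot_of_le_smul_of_le_jacobson_bot I _ (IsNoetherian.noetherian _)
    (by rwa [← Submodule.smul_assoc, smul_eq_mul, ← pow_succ']) hI

open IsLocalRing in
/-- If `R` is Noetherian local with maximal ideal `m` and `M` is a finitely generated
`R`-module with `length (M / m^(r+1) M) = r`, then `m^r M = 0` and `length M = r`. -/
theorem stmt0 {R M : Type*} [CommRing R] [IsLocalRing R] [IsNoetherianRing R]
    [AddCommGroup M] [Module R M] [Module.Finite R M] (r : ℕ)
    (h : moduleLengthEq R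
      (M ⧸ ((IsLocalRing.maximalIdeal R ^ (r + 1)) • (⊤ : Submodule R M))) r) :
    (IsLocalRing.maximalIdeal R ^ r) • (⊤ : Submodule R M) = ⊥ ∧ moduleLengthEq R M r := by
  set m := maximalIdeal R
  set K := m ^ (r + 1) • (⊤ : Submodule R M)
  have hm : m ≤ Ideal.jacobson ⊥ := maximalIdeal_le_jacobson ⊥
  have hlen : Module.length R (M ⧸ K) = r := moduleLengthEq_iff_length_eq.mp h
  have hanti : Antitone fun j ↦ m ^ j • (⊤ : Submodule R (M ⧸ K)) :=
    fun _ _ ↦ Submodule.pow_smul_top_le m _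
  obtain ⟨j, hjr, hj⟩ :=
    hanti.exists_le_eq_succ_of_krullDim_le (by rw [← Module.coe_length, hlen]; rfl)
  have hQ : m ^ r • (⊤ : Submodule R (M ⧸ K)) = ⊥ :=
    eq_bot_iff.mpr <| (Submodule.pow_smul_top_le m _ hjr).trans <|
      (Submodule.pow_smul_top_eq_bot_of_pow_smul_top_le hm hj.ge).le
  have hle : m ^ r • (⊤ : Submodule R M) ≤ K := by
    simpa [hQ] using Submodule.comap_smul_top_of_surjective (m ^ r) K.mkQ K.mkQ_surjective
  have hM : m ^ r • (⊤ : Submodule R M) = ⊥ :=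
    Submodule.pow_smul_top_eq_bot_of_pow_smul_top_le hm hle
  have hK : K = ⊥ := eq_bot_iff.mpr <| hM ▸ Submodule.pow_smul_top_le m M r.le_succ
  refine ⟨hM, moduleLengthEq_iff_length_eq.mpr ?_⟩
  rw [← (Submodule.quotEquivOfEqBot K hK).length_eq, hlen]
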